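/- arXiv:2601.02217 — 3 statements merged into one kernel-verified Lean document; each statement's English description precedes it below -/
import Mathlib

section
/- Let ζ ∈ 𝕋 and let g be analytic on the open unit disk 𝔻 with square-summable Taylor coefficients (ĝ(n))ₙ (i.e. g ∈ H²). Define f(z) = a + (z − ζ)g(z) on 𝔻 for some a ∈ ℂ. Then the Taylor series of f converges at ζ and ∑_{j=0}^∞ f̂(j) ζ^j = a; in particular a equals the radial limit lim_{r→1⁻} f(rζ). -/
open Complex Filter Metric Topology

/-!
By uniqueness of Taylor coefficients, `f̂ 0 = a - ζ ĝ 0` and `f̂ (n + 1) = ĝ n - ζ ĝ (n + 1)`,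
so the partial sums of the Taylor series of `f` at `ζ` telescope to `a - ĝ N ζ ^ (N + 1)`,
which tends to `a` because `ĝ ∈ ℓ²` tends to zero.
The radial limit then follows from Abel's limit theorem.
-/

theorem tendsto_zero_of_summable_norm_sq {E : Type*} [SeminormedAddCommGroup E] {u : ℕ → E}
    (h : Summable fun n => ‖u n‖ ^ 2) : Tendsto u atTop (𝓝 0) := by
  rw [tendsto_zero_iff_norm_tendsto_zero]
  simpa [Real.sqrt_sq (norm_nonneg _)] using h.tendsto_atTop_zero.sqrt

section AddSubMulCoeff

variable {R : Type*} [CommRing R]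

/-- The Taylor coefficients of `z ↦ a + (z - ζ) * g z`, where `g` has Taylor coefficients `b`. -/
def addSubMulCoeff (a ζ : R) (b : ℕ → R) : ℕ → R
  | 0 => a - ζ * b 0
  | n + 1 => b n - ζ * b (n + 1)

theorem sum_range_succ_addSubMulCoeff_mul_pow (a ζ : R) (b : ℕ → R) (N : ℕ) :
    ∑ j ∈ Finset.range (N + 1), addSubMulCoeff a ζ b j * ζ ^ j = a - b N * ζ ^ (N + 1) := by
  induction N with
  | zero => simp [addSubMulCoeff, mul_comm]
  | succ N ih => rw [Finset.sum_range_succ, ih, addSubMulCoeff]; ring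

theorem HasSum.addSubMulCoeff_mul_pow [TopologicalSpace R] [IsTopologicalRing R]
    {b : ℕ → R} {z s : R} (a ζ : R) (h : HasSum (fun n => b n * z ^ n) s) :
    HasSum (fun n => addSubMulCoeff a ζ b n * z ^ n) (a + (z - ζ) * s) := by
  have htail : HasSum (fun n => b (n + 1) * z ^ (n + 1)) (s - b 0) := by
    simpa using (hasSum_nat_add_iff' 1).mpr h
  have hsucc : HasSum (fun n => addSubMulCoeff a ζ b (n + 1) * z ^ (n + 1))
      (z * s - ζ * (s - b 0)) := by
    refine ((h.mul_left z).sub (htail.mul_left ζ)).congr_fun fun n => ?_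
    simp only [addSubMulCoeff]
    ring
  convert hsucc.zero_add (f := fun n => addSubMulCoeff a ζ b n * z ^ n) using 1
  simp only [addSubMulCoeff]
  ring

end AddSubMulCoeff

theorem tendsto_sum_range_addSubMulCoeff_mul_pow {𝕜 : Type*} [NormedField 𝕜] {a ζ : 𝕜}
    {b : ℕ → 𝕜} (hζ : ‖ζ‖ ≤ 1) (hb : Tendsto b atTop (𝓝 0)) :
    Tendsto (fun N => ∑ j ∈ Finset.range N, addSubMulCoeff a ζ b j * ζ ^ j) atTop (𝓝 a) := by
  rw [← tendsto_add_atTop_iff_nat 1]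
  simp only [sum_range_succ_addSubMulCoeff_mul_pow]
  have hrem : Tendsto (fun N => b N * ζ ^ (N + 1)) atTop (𝓝 0) := by
    refine squeeze_zero_norm (fun N => ?_) (tendsto_zero_iff_norm_tendsto_zero.mp hb)
    rw [norm_mul, norm_pow]
    exact mul_le_of_le_one_right (norm_nonneg _) (pow_le_one₀ (norm_nonneg _) hζ)
  simpa using tendsto_const_nhds.sub hrem

theorem hasFPowerSeriesOnBall_ofScalars_of_hasSum {c : ℕ → ℂ} {F : ℂ → ℂ} {r : ℝ} (hr : 0 < r)
    (h : ∀ z ∈ ball (0 : ℂ) r, HasSum (fun n => c n * z ^ n) (F z)) :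
    HasFPowerSeriesOnBall F (FormalMultilinearSeries.ofScalars ℂ c) 0 (ENNReal.ofReal r) where
  r_le := by
    refine ENNReal.le_of_forall_nnreal_lt fun s hs => ?_
    have hs' : (s : ℂ) ∈ ball (0 : ℂ) r := by
      simpa using ENNReal.coe_lt_ofReal.mp hs
    refine FormalMultilinearSeries.le_radius_of_tendsto _ (l := 0) ?_
    simpa [FormalMultilinearSeries.ofScalars_norm] using
      (h _ hs').summable.tendsto_atTop_zero.norm
  r_pos := ENNReal.ofReal_pos.mpr hr
  hasSum := by
    intro y hy
    simpa [FormalMultilinearSeries.ofScalars_apply_eq, mul_comm] using h y (by simpa using hy)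

theorem eq_of_hasSum_pow_of_hasSum_pow {c d : ℕ → ℂ} {F : ℂ → ℂ} {r : ℝ} (hr : 0 < r)
    (hc : ∀ z ∈ ball (0 : ℂ) r, HasSum (fun n => c n * z ^ n) (F z))
    (hd : ∀ z ∈ ball (0 : ℂ) r, HasSum (fun n => d n * z ^ n) (F z)) : c = d :=
  (FormalMultilinearSeries.ofScalars_series_eq_iff ℂ c d).mp <|
    (hasFPowerSeriesOnBall_ofScalars_of_hasSum hr hc).hasFPowerSeriesAt.eq_formalMultilinearSeries
      (hasFPowerSeriesOnBall_ofScalars_of_hasSum hr hd).hasFPowerSeriesAt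

theorem tendsto_radial_of_tendsto_sum_range {c : ℕ → ℂ} {F : ℂ → ℂ} {ζ l : ℂ} (hζ : ‖ζ‖ = 1)
    (hF : ∀ z ∈ ball (0 : ℂ) 1, HasSum (fun n => c n * z ^ n) (F z))
    (hl : Tendsto (fun N => ∑ j ∈ Finset.range N, c j * ζ ^ j) atTop (𝓝 l)) :
    Tendsto (fun r : ℝ => F (r * ζ)) (𝓝[<] 1) (𝓝 l) := by
  refine ((tendsto_tsum_powerSeries_nhdsWithin_lt hl).comp tendsto_map).congr' ?_
  filter_upwards [Ioo_mem_nhdsLT (show (-1 : ℝ) < 1 by norm_num)] with r hr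
  have hz : (r : ℂ) * ζ ∈ ball (0 : ℂ) 1 := by simpa [hζ, abs_lt] using hr
  rw [Function.comp_apply, ← (hF _ hz).tsum_eq]
  simp only [mul_pow, mul_assoc, mul_comm]

/-- Let `ζ ∈ 𝕋` and let `g` be analytic on `𝔻` with square-summable
Taylor coefficients `gh` (i.e. `g ∈ H²`).  Let `f(z) = a + (z - ζ) g(z)` on `𝔻`, with
Taylor coefficients `fh`.  Then the Taylor series of `f` converges at `ζ` with sum `a`,
and `a` is the radial limit of `f` at `ζ`. -/
theorem taylor_series_converges_at_boundary_point
    (ζ : ℂ) (hζ : ‖ζ‖ = 1)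
    (g : ℂ → ℂ) (gh : ℕ → ℂ)
    (hg : ∀ z ∈ Metric.ball (0 : ℂ) 1, HasSum (fun n => gh n * z ^ n) (g z))
    (hg2 : Summable (fun n => ‖gh n‖ ^ 2))
    (a : ℂ) (f : ℂ → ℂ)
    (hf : ∀ z ∈ Metric.ball (0 : ℂ) 1, f z = a + (z - ζ) * g z)
    (fh : ℕ → ℂ)
    (hfh : ∀ z ∈ Metric.ball (0 : ℂ) 1, HasSum (fun n => fh n * z ^ n) (f z)) :
    Tendsto (fun N => ∑ j ∈ Finset.range N, fh j * ζ ^ j) atTop (𝓝 a) ∧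
      Tendsto (fun r : ℝ => f ((r : ℂ) * ζ)) (𝓝[<] (1 : ℝ)) (𝓝 a) := by
  have hfh_eq : fh = addSubMulCoeff a ζ gh :=
    eq_of_hasSum_pow_of_hasSum_pow one_pos hfh fun z hz =>
      hf z hz ▸ (hg z hz).addSubMulCoeff_mul_pow a ζ
  have hsum : Tendsto (fun N => ∑ j ∈ Finset.range N, fh j * ζ ^ j) atTop (𝓝 a) :=
    hfh_eq ▸ tendsto_sum_range_addSubMulCoeff_mul_pow hζ.le (tendsto_zero_of_summable_norm_sq hg2)
  exact ⟨hsum, tendsto_radial_of_tendsto_sum_range hζ hfh hsum⟩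
end

section
/- Let ζ ∈ 𝕋, let g ∈ H², a ∈ ℂ, and set f(z) = a + (z − ζ)g(z) on 𝔻. Then for every j ≥ 0 the series ∑_{k=j+1}^∞ f̂(k) ζ^{k−j−1} converges and its sum equals ĝ(j). -/
/-! Comparing Taylor coefficients in `f = a + (z - ζ) g` gives `f̂(n+1) = ĝ(n) - ζ ĝ(n+1)`, so
the partial sums telescope to `ĝ(j) - ĝ(j+N) ζ^N`; the tail vanishes because `|ζ| = 1` and the
coefficients of an `H²` function tend to zero. -/

open Filter Metric Topology

theorem HasSum.const_add_sub_mul {R : Type*} [CommRing R] [TopologicalSpace R]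
    [IsTopologicalRing R] {b : ℕ → R} {z G : R} (hG : HasSum (fun n => b n * z ^ n) G)
    (a ζ : R) :
    HasSum (fun n => ((if n = 0 then a else b (n - 1)) - ζ * b n) * z ^ n)
      (a + (z - ζ) * G) := by
  set c : ℕ → R := fun n => (if n = 0 then a else b (n - 1)) * z ^ n
  have hc : HasSum (fun n => c (n + 1)) (z * G) := by
    simpa only [c, Nat.add_eq_zero_iff, one_ne_zero, and_false, if_false, Nat.add_sub_cancel,
      pow_succ, ← mul_assoc, mul_comm z] using hG.mul_left z
  have hshift : HasSum c (a + z * G) := by simpa [c] using hc.zero_add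
  rw [show a + (z - ζ) * G = a + z * G - ζ * G by ring]
  simpa only [sub_mul, mul_assoc] using hshift.sub (hG.mul_left ζ)

theorem eq_of_hasSum_mul_pow {𝕜 : Type*} [NontriviallyNormedField 𝕜] {F : 𝕜 → 𝕜}
    {a b : ℕ → 𝕜} (ha : ∀ᶠ z in 𝓝 0, HasSum (fun n => a n * z ^ n) (F z))
    (hb : ∀ᶠ z in 𝓝 0, HasSum (fun n => b n * z ^ n) (F z)) : a = b := by
  have hasFPowerSeriesAt : ∀ c : ℕ → 𝕜,
      (∀ᶠ z in 𝓝 0, HasSum (fun n => c n * z ^ n) (F z)) →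
        HasFPowerSeriesAt F (FormalMultilinearSeries.ofScalars 𝕜 c) 0 := fun c hc => by
    rw [hasFPowerSeriesAt_iff]
    simpa only [FormalMultilinearSeries.coeff_ofScalars, zero_add, smul_eq_mul, mul_comm] using hc
  exact FormalMultilinearSeries.ofScalars_series_injective 𝕜 𝕜
    ((hasFPowerSeriesAt a ha).eq_formalMultilinearSeries (hasFPowerSeriesAt b hb))

theorem coeff_succ_eq_of_eq_const_add_sub_mul {𝕜 : Type*} [NontriviallyNormedField 𝕜]
    {f g : 𝕜 → 𝕜} {fh gh : ℕ → 𝕜} {a ζ : 𝕜}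
    (hg : ∀ᶠ z in 𝓝 0, HasSum (fun n => gh n * z ^ n) (g z))
    (hf : ∀ᶠ z in 𝓝 0, f z = a + (z - ζ) * g z)
    (hfh : ∀ᶠ z in 𝓝 0, HasSum (fun n => fh n * z ^ n) (f z)) (n : ℕ) :
    fh (n + 1) = gh n - ζ * gh (n + 1) := by
  have hcoeff : fh = fun n => (if n = 0 then a else gh (n - 1)) - ζ * gh n := by
    refine eq_of_hasSum_mul_pow hfh ?_
    filter_upwards [hg, hf] with z hgz hfz
    exact hfz ▸ hgz.const_add_sub_mul a ζ
  simp [hcoeff]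

theorem sum_range_mul_pow_eq_sub_of_coeff_succ_eq {R : Type*} [CommRing R] {fh gh : ℕ → R}
    {ζ : R} (h : ∀ n, fh (n + 1) = gh n - ζ * gh (n + 1)) (j N : ℕ) :
    ∑ i ∈ Finset.range N, fh (j + 1 + i) * ζ ^ i = gh j - gh (j + N) * ζ ^ N := by
  have hstep : ∀ i,
      fh (j + 1 + i) * ζ ^ i = gh (j + i) * ζ ^ i - gh (j + (i + 1)) * ζ ^ (i + 1) := fun i => by
    rw [add_right_comm, h, ← add_assoc]; ring
  simp only [hstep, Finset.sum_range_sub' (fun i => gh (j + i) * ζ ^ i), add_zero, pow_zero,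
    mul_one]

theorem tendsto_mul_pow_of_norm_le_one {R : Type*} [NormedRing R] [NormOneClass R] {u : ℕ → R}
    {ζ : R} (hu : Tendsto u atTop (𝓝 0)) (hζ : ‖ζ‖ ≤ 1) :
    Tendsto (fun N => u N * ζ ^ N) atTop (𝓝 0) := by
  refine squeeze_zero_norm (fun N => ?_) (tendsto_zero_iff_norm_tendsto_zero.mp hu)
  calc ‖u N * ζ ^ N‖ ≤ ‖u N‖ * ‖ζ‖ ^ N :=
        (norm_mul_le _ _).trans (by gcongr; exact norm_pow_le _ _)
    _ ≤ ‖u N‖ := mul_le_of_le_one_right (norm_nonneg _) (pow_le_one₀ (norm_nonneg _) hζ)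

/-- Let `ζ ∈ 𝕋`, `g ∈ H²` with Taylor coefficients `gh`, `a ∈ ℂ`, and
`f(z) = a + (z - ζ) g(z)` on `𝔻`, with Taylor coefficients `fh`.  Then for every `j ≥ 0`
the series `∑_{k=j+1}^∞ fh(k) ζ^{k-j-1}` converges with sum `gh(j)`. -/
theorem coefficients_of_difference_quotient
    (ζ : ℂ) (hζ : ‖ζ‖ = 1)
    (g : ℂ → ℂ) (gh : ℕ → ℂ)
    (hg : ∀ z ∈ Metric.ball (0 : ℂ) 1, HasSum (fun n => gh n * z ^ n) (g z))
    (hg2 : Summable (fun n => ‖gh n‖ ^ 2))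
    (a : ℂ) (f : ℂ → ℂ)
    (hf : ∀ z ∈ Metric.ball (0 : ℂ) 1, f z = a + (z - ζ) * g z)
    (fh : ℕ → ℂ)
    (hfh : ∀ z ∈ Metric.ball (0 : ℂ) 1, HasSum (fun n => fh n * z ^ n) (f z)) :
    ∀ j : ℕ,
      Tendsto (fun N => ∑ i ∈ Finset.range N, fh (j + 1 + i) * ζ ^ i) atTop (𝓝 (gh j)) := by
  intro j
  have hball : ball (0 : ℂ) 1 ∈ 𝓝 0 := ball_mem_nhds 0 one_pos
  have hcoeff := coeff_succ_eq_of_eq_const_add_sub_mul (eventually_of_mem hball hg)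
    (eventually_of_mem hball hf) (eventually_of_mem hball hfh)
  have hgh : Tendsto gh atTop (𝓝 0) := by
    rw [tendsto_zero_iff_norm_tendsto_zero]
    simpa only [Real.sqrt_sq (norm_nonneg _), Real.sqrt_zero] using hg2.tendsto_atTop_zero.sqrt
  have htail : Tendsto (fun N => gh (j + N) * ζ ^ N) atTop (𝓝 0) :=
    tendsto_mul_pow_of_norm_le_one
      (hgh.comp ((tendsto_add_atTop_nat j).congr fun N => add_comm N j)) hζ.le
  simpa only [sum_range_mul_pow_eq_sub_of_coeff_succ_eq hcoeff, sub_zero]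
    using tendsto_const_nhds.sub htail
end

section
/- Fix s ≥ 1 and distinct points ζ₀, …, ζ_{s−1} ∈ 𝕋, set q(z) = ∏_{k=0}^{s−1}(z − ζ_k), p_k(z) = q(z)/((z − ζ_k) q'(ζ_k)) for 0 ≤ k ≤ s−1, and p_j(z) = q(z) z^{j−s} for j ≥ s. Then the family (p_j)_{j≥0} is orthonormal with respect to the inner product ⟨f₁, f₂⟩_{D_μ} := ∑_{k=0}^{s−1} f₁(ζ_k) conj(f₂(ζ_k)) + ∑_{n=0}^∞ (Qf₁)^(n) conj((Qf₂)^(n)); explicitly, ∑_{ℓ=0}^{s−1} p_i(ζ_ℓ) conj(p_j(ζ_ℓ)) + ∑_{n=0}^∞ (Qp_i)^(n) conj((Qp_j)^(n)) = δ_{ij} for all i, j ≥ 0. -/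
open Complex Polynomial Filter Metric Topology

noncomputable section

/-- Difference quotient on polynomials: `(p - p(c))/(X - c)`; for a polynomial the
radial limit at `c` is just the evaluation `p(c)`, and the division is exact. -/
def dqPoly (c : ℂ) (p : Polynomial ℂ) : Polynomial ℂ :=
  (p - Polynomial.C (p.eval c)) /ₘ (Polynomial.X - Polynomial.C c)

/-- `Q = Q_{ζ₀} Q_{ζ₁} ⋯ Q_{ζ_{s-1}}` acting on polynomials. -/
def Qiter (s : ℕ) (ζ : Fin s → ℂ) (p : Polynomial ℂ) : Polynomial ℂ :=
  (List.ofFn ζ).foldr dqPoly p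

/-- The orthonormal basis polynomials: `p_j = q/((z - ζ_j) q'(ζ_j))` for `j < s`
and `p_j = q(z) z^{j-s}` for `j ≥ s`, where `q(z) = ∏ (z - ζ_k)`. -/
def pbasis (s : ℕ) (ζ : Fin s → ℂ) (j : ℕ) : Polynomial ℂ :=
  if h : j < s then
    Polynomial.C (((Polynomial.derivative (∏ k, (Polynomial.X - Polynomial.C (ζ k)))).eval
        (ζ ⟨j, h⟩))⁻¹) *
      ((∏ k, (Polynomial.X - Polynomial.C (ζ k))) /ₘ (Polynomial.X - Polynomial.C (ζ ⟨j, h⟩)))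
  else (∏ k, (Polynomial.X - Polynomial.C (ζ k))) * Polynomial.X ^ (j - s)

/-!
The polynomials `p_k`, `k < s`, are the Lagrange basis at the nodes `ζ`: their values at the
nodes form the identity matrix, and having degree `s - 1` they are killed by the `s` difference
quotients in `Q`. For `j ≥ s`, `p_j = q z^{j-s}` vanishes at every node and `Q p_j = z^{j-s}`.
So the `D_μ` coordinates of `p_j` (node values, then Taylor coefficients of `Q p_j`) form the
`j`-th unit vector of `ℂ^s ⊕ ℓ²(ℕ)`, and unit vectors are orthonormal.
-/

theorem natDegree_dqPoly_le (c : ℂ) (p : ℂ[X]) : (dqPoly c p).natDegree ≤ p.natDegree - 1 := by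
  rw [dqPoly, natDegree_divByMonic _ (monic_X_sub_C c), natDegree_X_sub_C, natDegree_sub_C]

theorem dqPoly_C (c a : ℂ) : dqPoly c (C a) = 0 := by
  simp [dqPoly]

theorem dqPoly_X_sub_C_mul (c : ℂ) (g : ℂ[X]) : dqPoly c ((X - C c) * g) = g := by
  rw [dqPoly, eval_mul, eval_sub, eval_X, eval_C, sub_self, zero_mul, C_0, sub_zero,
    mul_divByMonic_cancel_left g (monic_X_sub_C c)]

theorem natDegree_foldr_dqPoly_le (L : List ℂ) (p : ℂ[X]) :
    (L.foldr dqPoly p).natDegree ≤ p.natDegree - L.length := by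
  induction L with
  | nil => simp
  | cons c L ih =>
    have := natDegree_dqPoly_le c (L.foldr dqPoly p)
    rw [List.foldr_cons, List.length_cons]
    omega

theorem foldr_dqPoly_eq_zero_of_natDegree_lt {L : List ℂ} {p : ℂ[X]}
    (h : p.natDegree < L.length) : L.foldr dqPoly p = 0 := by
  cases L with
  | nil => simp at h
  | cons c L =>
    have hconst : (L.foldr dqPoly p).natDegree = 0 := by
      have := natDegree_foldr_dqPoly_le L p
      rw [List.length_cons] at h
      omega
    rw [List.foldr_cons, eq_C_of_natDegree_eq_zero hconst, dqPoly_C]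

theorem foldr_dqPoly_prod_mul (L : List ℂ) (g : ℂ[X]) :
    L.foldr dqPoly ((L.map fun c => X - C c).prod * g) = g := by
  induction L generalizing g with
  | nil => simp
  | cons c L ih =>
    rw [List.map_cons, List.prod_cons, mul_assoc, mul_left_comm, List.foldr_cons, ih,
      dqPoly_X_sub_C_mul]

section Qiter

variable {s : ℕ} (ζ : Fin s → ℂ)

theorem Qiter_eq_zero_of_natDegree_lt {p : ℂ[X]} (h : p.natDegree < s) : Qiter s ζ p = 0 :=
  foldr_dqPoly_eq_zero_of_natDegree_lt (by rwa [List.length_ofFn])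

theorem Qiter_nodal_mul (g : ℂ[X]) : Qiter s ζ (Lagrange.nodal Finset.univ ζ * g) = g := by
  have hnodal : Lagrange.nodal Finset.univ ζ = ((List.ofFn ζ).map fun c => X - C c).prod := by
    rw [List.map_ofFn, List.prod_ofFn, Lagrange.nodal_eq]
    rfl
  rw [Qiter, hnodal, foldr_dqPoly_prod_mul]

end Qiter

section pbasis

variable {s : ℕ} {ζ : Fin s → ℂ}

theorem pbasis_of_lt {j : ℕ} (h : j < s) :
    pbasis s ζ j = Lagrange.basis Finset.univ ζ ⟨j, h⟩ := by
  rw [pbasis, dif_pos h, Lagrange.basis_eq_prod_sub_inv_mul_nodal_div (Finset.mem_univ _),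
    Lagrange.nodalWeight_eq_eval_derivative_nodal (Finset.mem_univ _),
    divByMonic_eq_div _ (monic_X_sub_C _), Lagrange.nodal_eq]

theorem pbasis_of_le {j : ℕ} (h : s ≤ j) :
    pbasis s ζ j = Lagrange.nodal Finset.univ ζ * X ^ (j - s) := by
  rw [pbasis, dif_neg (not_lt.mpr h), Lagrange.nodal_eq]

theorem eval_pbasis_node (hinj : Function.Injective ζ) (j : ℕ) (ℓ : Fin s) :
    (pbasis s ζ j).eval (ζ ℓ) = if j = ℓ then 1 else 0 := by
  rcases lt_or_ge j s with h | h
  · rw [pbasis_of_lt h]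
    by_cases hjℓ : j = ℓ
    · obtain rfl : ⟨j, h⟩ = ℓ := Fin.ext hjℓ
      rw [if_pos rfl, Lagrange.eval_basis_self hinj.injOn (Finset.mem_univ _)]
    · rw [if_neg hjℓ, Lagrange.eval_basis_of_ne (Fin.ne_of_val_ne hjℓ) (Finset.mem_univ _)]
  · rw [pbasis_of_le h, eval_mul, Lagrange.eval_nodal_at_node (Finset.mem_univ ℓ), zero_mul,
      if_neg (by omega)]

theorem coeff_Qiter_pbasis (hinj : Function.Injective ζ) (j n : ℕ) :
    (Qiter s ζ (pbasis s ζ j)).coeff n = if j = n + s then 1 else 0 := by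
  rcases lt_or_ge j s with h | h
  · have hdeg : (pbasis s ζ j).natDegree < s := by
      rw [pbasis_of_lt h, Lagrange.natDegree_basis hinj.injOn (Finset.mem_univ _),
        Finset.card_univ, Fintype.card_fin]
      omega
    rw [Qiter_eq_zero_of_natDegree_lt ζ hdeg, coeff_zero, if_neg (by omega)]
  · rw [pbasis_of_le h, Qiter_nodal_mul, coeff_X_pow]
    exact if_congr (by omega) rfl rfl

end pbasis

theorem tsum_ite_eq_mul_conj_ite_eq (i j : ℕ) :
    ∑' m : ℕ, (if i = m then (1 : ℂ) else 0) * starRingEnd ℂ (if j = m then 1 else 0) =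
      if i = j then 1 else 0 := by
  rw [tsum_eq_single i fun m hm => by simp [Ne.symm hm]]
  simp [eq_comm]

theorem basis_polynomials_orthonormal_general
    (s : ℕ) (ζ : Fin s → ℂ)
    (hinj : Function.Injective ζ) :
    ∀ i j : ℕ,
      (∑ ℓ : Fin s, (pbasis s ζ i).eval (ζ ℓ) *
          (starRingEnd ℂ) ((pbasis s ζ j).eval (ζ ℓ))) +
        (∑' n : ℕ, (Qiter s ζ (pbasis s ζ i)).coeff n *
          (starRingEnd ℂ) ((Qiter s ζ (pbasis s ζ j)).coeff n)) =
      if i = j then 1 else 0 := by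
  intro i j
  set δ : ℕ → ℕ → ℂ := fun a m => if a = m then 1 else 0
  have hsummable : Summable fun m => δ i m * starRingEnd ℂ (δ j m) :=
    summable_of_ne_finset_zero (s := {i}) fun m hm => by
      simp [δ, Ne.symm (Finset.notMem_singleton.mp hm)]
  simp only [eval_pbasis_node hinj, coeff_Qiter_pbasis hinj]
  rw [Fin.sum_univ_eq_sum_range (fun ℓ => δ i ℓ * starRingEnd ℂ (δ j ℓ)),
    hsummable.sum_add_tsum_nat_add, tsum_ite_eq_mul_conj_ite_eq]

/-- For `s ≥ 1` and distinct `ζ₀, …, ζ_{s-1} ∈ 𝕋`, the family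
`(p_j)_{j ≥ 0}` is orthonormal for the `D_μ` inner product
`⟨f₁, f₂⟩ = ∑_{ℓ<s} f₁(ζ_ℓ) conj(f₂(ζ_ℓ)) + ∑_n (Qf₁)^(n) conj((Qf₂)^(n))`. -/
theorem basis_polynomials_orthonormal
    (s : ℕ) (hs : 1 ≤ s) (ζ : Fin s → ℂ)
    (hζ : ∀ k, ‖ζ k‖ = 1) (hinj : Function.Injective ζ) :
    ∀ i j : ℕ,
      (∑ ℓ : Fin s, (pbasis s ζ i).eval (ζ ℓ) *
          (starRingEnd ℂ) ((pbasis s ζ j).eval (ζ ℓ))) +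
        (∑' n : ℕ, (Qiter s ζ (pbasis s ζ i)).coeff n *
          (starRingEnd ℂ) ((Qiter s ζ (pbasis s ζ j)).coeff n)) =
      if i = j then 1 else 0 :=
  basis_polynomials_orthonormal_general s ζ hinj

end
end
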